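/- arXiv:1201.3035 — 3 statements merged into one kernel-verified Lean document; each statement's English description precedes it below -/
import Mathlib

section
/- Let $R^{[i]}(z) = \sum_{j=0}^s a_j^{[i]} z^j$ be a sequence of complex polynomials of degree at most $s$, with coefficient vectors $a^{[i]} = (a_0^{[i]}, \dots, a_s^{[i]})$. If the sequence of norms $\|a^{[i]}\|$ is unbounded in $\mathbb{R}$, then for all but at most $s$ points $z \in \mathbb{C}$, the sequence $(R^{[i]}(z))_i$ is unbounded. -/
lemma key_bound (s : ℕ) (a : ℕ → Fin (s + 1) → ℂ) (z : Fin (s + 1) → ℂ)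
    (hz : Function.Injective z)
    (hb : ∀ k, ∃ M : ℝ, ∀ i : ℕ, ‖∑ j : Fin (s + 1), a i j * z k ^ (j : ℕ)‖ ≤ M) :
    ∃ M : ℝ, ∀ i : ℕ, ‖a i‖ ≤ M := by
  choose Mk hMk using hb
  set V := Matrix.vandermonde z with hV
  have hdet : V.det ≠ 0 := by
    rw [hV, Matrix.det_vandermonde_ne_zero_iff]
    exact hz
  have hinv : V⁻¹ * V = 1 := Matrix.nonsing_inv_mul V (isUnit_iff_ne_zero.mpr hdet)
  let L := LinearMap.toContinuousLinearMap (Matrix.mulVecLin (V⁻¹))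
  refine ⟨‖L‖ * ∑ k, |Mk k|, fun i => ?_⟩
  have ha : a i = V⁻¹.mulVec (V.mulVec (a i)) := by
    rw [Matrix.mulVec_mulVec, hinv, Matrix.one_mulVec]
  have he : ‖V.mulVec (a i)‖ ≤ ∑ k, |Mk k| := by
    refine (pi_norm_le_iff_of_nonneg (by positivity)).mpr fun k => ?_
    calc ‖V.mulVec (a i) k‖ = ‖∑ j : Fin (s + 1), a i j * z k ^ (j : ℕ)‖ := by
          congr 1
          simp [Matrix.mulVec, Matrix.vandermonde, dotProduct, mul_comm, hV]
      _ ≤ Mk k := hMk k i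
      _ ≤ |Mk k| := le_abs_self _
      _ ≤ ∑ k, |Mk k| := Finset.single_le_sum (f := fun k => |Mk k|) (fun _ _ => abs_nonneg _) (Finset.mem_univ k)
  have hL : ∀ x, L x = V⁻¹.mulVec x := fun x => by
    simp [L, Matrix.mulVecLin_apply]
  calc ‖a i‖ = ‖L (V.mulVec (a i))‖ := by rw [hL, ← ha]
    _ ≤ ‖L‖ * ‖V.mulVec (a i)‖ := L.le_opNorm _
    _ ≤ ‖L‖ * ∑ k, |Mk k| := mul_le_mul_of_nonneg_left he (norm_nonneg L)

theorem stmt_0 (s : ℕ) (a : ℕ → Fin (s + 1) → ℂ)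
    (hunb : ¬ ∃ M : ℝ, ∀ i : ℕ, ‖a i‖ ≤ M) :
    {z : ℂ | ∃ M : ℝ, ∀ i : ℕ, ‖∑ j : Fin (s + 1), a i j * z ^ (j : ℕ)‖ ≤ M}.Finite ∧
    {z : ℂ | ∃ M : ℝ, ∀ i : ℕ, ‖∑ j : Fin (s + 1), a i j * z ^ (j : ℕ)‖ ≤ M}.ncard ≤ s := by
  set S := {z : ℂ | ∃ M : ℝ, ∀ i : ℕ, ‖∑ j : Fin (s + 1), a i j * z ^ (j : ℕ)‖ ≤ M} with hS
  have claim : ∀ t : Finset ℂ, ↑t ⊆ S → t.card ≤ s := by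
    intro t ht
    by_contra hcard
    push_neg at hcard
    obtain ⟨t', ht', hcard'⟩ := Finset.exists_subset_card_eq (by omega : s + 1 ≤ t.card)
    let e := Finset.equivFinOfCardEq hcard'
    let z : Fin (s + 1) → ℂ := fun k => (e.symm k : ℂ)
    have hzinj : Function.Injective z :=
      Subtype.val_injective.comp e.symm.injective
    have hzS : ∀ k, z k ∈ S := fun k => ht (ht' (e.symm k).2)
    exact hunb (key_bound s a z hzinj fun k => hzS k)
  have hfin : S.Finite := by
    by_contra hinf
    obtain ⟨t, htS, htc⟩ := Set.Infinite.exists_subset_card_eq hinf (s + 1)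
    have := claim t htS
    omega
  refine ⟨hfin, ?_⟩
  rw [Set.ncard_eq_toFinset_card S hfin]
  exact claim hfin.toFinset (by simp)
end

section
/- Suppose $R : \mathbb{C} \to \mathbb{C}$ is Lipschitz with constant $L$ on a set containing $h\Lambda$, where $\Lambda \subset \mathbb{C}$ is compact. Let $\Lambda_n \subset \Lambda$ be a finite subset with $\nu_n := \max_{\gamma \in \Lambda} \min_{\lambda \in \Lambda_n} |\gamma - \lambda|$. If $\max_{\lambda \in \Lambda_n}(|R(h\lambda)| - 1) \le r < 0$ and $\nu_n < -r/(hL)$, then $|R(h\gamma)| \le 1$ for all $\gamma \in \Lambda$. -/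
theorem stmt_12 (h : ℝ) (hh : 0 < h) (Λ : Set ℂ) (hΛc : IsCompact Λ) (hΛne : Λ.Nonempty)
    (Λn : Finset ℂ) (hsub : ↑Λn ⊆ Λ) (hne : Λn.Nonempty)
    (R : ℂ → ℂ) (L : ℝ) (hL : 0 < L)
    (hlip : ∀ z₁ ∈ (fun lam : ℂ => (h : ℂ) * lam) '' Λ,
      ∀ z₂ ∈ (fun lam : ℂ => (h : ℂ) * lam) '' Λ, ‖R z₁ - R z₂‖ ≤ L * ‖z₁ - z₂‖)
    (r ν : ℝ) (hr : r < 0)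
    (hfeas : ∀ lam ∈ Λn, ‖R ((h : ℂ) * lam)‖ - 1 ≤ r)
    (hν : ∀ γ ∈ Λ, ∃ lam ∈ Λn, ‖γ - lam‖ ≤ ν)
    (hνsmall : ν < -r / (h * L)) :
    ∀ γ ∈ Λ, ‖R ((h : ℂ) * γ)‖ ≤ 1 := by
  intro γ hγ
  obtain ⟨lam, hlam, hd⟩ := hν γ hγ
  have h1 : ‖R ((h : ℂ) * γ) - R ((h : ℂ) * lam)‖ ≤ L * ‖(h : ℂ) * γ - (h : ℂ) * lam‖ :=
    hlip _ ⟨γ, hγ, rfl⟩ _ ⟨lam, hsub hlam, rfl⟩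
  have h2 : ‖(h : ℂ) * γ - (h : ℂ) * lam‖ = h * ‖γ - lam‖ := by
    rw [← mul_sub, norm_mul, Complex.norm_real, Real.norm_of_nonneg hh.le]
  have h3 : ‖R ((h : ℂ) * γ)‖ ≤ ‖R ((h : ℂ) * lam)‖ + L * (h * ‖γ - lam‖) := by
    have := norm_sub_norm_le (R ((h : ℂ) * γ)) (R ((h : ℂ) * lam))
    rw [h2] at h1; linarith
  have hfr := hfeas lam hlam
  have hLν : h * L * ν < -r := by
    rw [lt_div_iff₀ (by positivity)] at hνsmall
    linarith
  have hν0 : 0 ≤ ‖γ - lam‖ := norm_nonneg _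
  nlinarith [mul_le_mul_of_nonneg_left hd (by positivity : (0:ℝ) ≤ L * h)]
end

section
/- For any polynomial $R(z) = 1 + z + \sum_{j=2}^s a_j z^j$ with real coefficients satisfying $|R(x)| \le 1$ for all $x \in [-h, 0]$, one has $h \le 2s^2$. -/
/-!
The affine substitution `x = h/2 (t - 1)` maps `[-1, 1]` onto `[-h, 0]`, so `Q(t) = R(h/2 (t - 1))`
has degree at most `s`, is bounded by `1` on `[-1, 1]` and has `Q'(1) = h/2 · R'(0) = h/2`.
Markov's extremal property of the Chebyshev polynomial at the endpoint, `Q'(1) ≤ T_s'(1) = s²`,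
then gives `h ≤ 2 s²`.
-/

open Polynomial

namespace Polynomial

theorem derivative_eval_one_le_sq_of_forall_abs_le_one {n : ℕ} {P : ℝ[X]}
    (hPdeg : P.natDegree ≤ n) (hPbnd : ∀ x ∈ Set.Icc (-1) 1, |P.eval x| ≤ 1) :
    (derivative P).eval 1 ≤ n ^ 2 := by
  simpa [Chebyshev.derivative_T_eval_one] using
    Chebyshev.eval_iterate_derivative_le_of_forall_abs_le_one (k := 1) le_rfl
      (degree_le_of_natDegree_le hPdeg) hPbnd

theorem mul_derivative_eval_zero_le_of_forall_abs_le_one {n : ℕ} {P : ℝ[X]} {h : ℝ} (hh : 0 < h)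
    (hPdeg : P.natDegree ≤ n) (hPbnd : ∀ x ∈ Set.Icc (-h) 0, |P.eval x| ≤ 1) :
    h * (derivative P).eval 0 ≤ 2 * n ^ 2 := by
  set Q := P.comp (C (h / 2) * (X - 1))
  have hQdeg : Q.natDegree ≤ n := by
    refine natDegree_comp_le.trans ?_
    have : (C (h / 2) * (X - 1)).natDegree ≤ 1 := by compute_degree
    nlinarith
  have hQbnd : ∀ t ∈ Set.Icc (-1) 1, |Q.eval t| ≤ 1 := by
    rintro t ⟨ht₁, ht₂⟩
    simp only [Q, eval_comp, eval_mul, eval_C, eval_sub, eval_X, eval_one]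
    exact hPbnd _ ⟨by nlinarith, by nlinarith⟩
  have hQder : (derivative Q).eval 1 = h / 2 * (derivative P).eval 0 := by
    simp [Q, derivative_comp, eval_comp]
  linarith [derivative_eval_one_le_sq_of_forall_abs_le_one hQdeg hQbnd]

end Polynomial

theorem stmt_16 (s : ℕ) (hs : 1 ≤ s) (h : ℝ) (hh : 0 < h) (a : ℕ → ℝ)
    (hstab : ∀ x ∈ Set.Icc (-h) (0 : ℝ),
      |1 + x + ∑ j ∈ Finset.Icc 2 s, a j * x ^ j| ≤ 1) :
    h ≤ 2 * s ^ 2 := by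
  set R : ℝ[X] := 1 + X + ∑ j ∈ Finset.Icc 2 s, C (a j) * X ^ j
  have hRdeg : R.natDegree ≤ s := by
    refine natDegree_add_le_of_degree_le (natDegree_add_le_of_degree_le ?_ ?_)
      (natDegree_sum_le_of_forall_le _ _ fun j hj => ?_)
    · simp
    · simpa using hs
    · exact natDegree_C_mul_X_pow_le _ _ |>.trans (Finset.mem_Icc.mp hj).2
  have hReval : ∀ x, R.eval x = 1 + x + ∑ j ∈ Finset.Icc 2 s, a j * x ^ j := by
    simp [R, eval_finsetSum]
  have hRder : (derivative R).eval 0 = 1 := by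
    rw [← coeff_zero_eq_eval_zero, coeff_derivative]
    simp [R, coeff_X_pow, coeff_one]
  simpa [hRder] using
    mul_derivative_eval_zero_le_of_forall_abs_le_one hh hRdeg (by simpa only [hReval] using hstab)
end
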